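/- Let $(\xi_n)_{n\ge1}$ be i.i.d. positive random variables with $\lambda := \mathbb{E}[\log\xi_1]$ existing in $[-\infty,\infty)$, let $c>0$ be a constant, and let $(\delta_l)_{l\ge1}$ be a deterministic real sequence with $\delta_l\to0$. Define $\Phi_n := \frac{1}{n}\sum_{k=1}^n\log\xi_k$ and $\psi_n := \log\big(c + \sum_{l=1}^n e^{l(\Phi_l+\delta_l)}\big)$. Then $\psi_n/n \to \lambda_+ := \max(\lambda,0)$ almost surely. -/

import Mathlib

/-!
Write `φ_l = Φ_l + δ_l`. The sum `c + ∑_{l ≤ n} exp (l φ_l)` is at least `c` and at least its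
last term `exp (n φ_n)`; if `φ_l ≤ a` for `l ≥ N` with `a ≥ 0`, it is at most
`n (c + A + 1) exp (n a)` with `A` the sum of the first `N` terms. Hence `ψ_n / n → max L 0`
whenever `φ_l → L ∈ [-∞, ∞)`, and the strong law gives `Φ_l → λ`. When `log ξ` is not integrable,
the strong law applied to the truncations `max (log ξ_k) (-M)` bounds `Φ` from above by their
means, which decrease to `-∞` by monotone convergence.
-/

open MeasureTheory Filter Finset ProbabilityTheory Topology

section Truncation

variable {α : Type*} [MeasurableSpace α] {μ : Measure α} [IsFiniteMeasure μ]

lemma integrable_min_natCast {g : α → ℝ} (hg : AEStronglyMeasurable g μ) (hg0 : 0 ≤ g) (M : ℕ) :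
    Integrable (fun x => min (g x) M) μ :=
  (integrable_const (M : ℝ)).mono' (hg.inf aestronglyMeasurable_const) <| ae_of_all _ fun x => by
    rw [Real.norm_eq_abs, abs_of_nonneg (le_min (hg0 x) M.cast_nonneg)]
    exact min_le_right _ _

lemma tendsto_integral_min_natCast_atTop {g : α → ℝ} (hg : AEStronglyMeasurable g μ)
    (hg0 : 0 ≤ g) (hint : ¬ Integrable g μ) :
    Tendsto (fun M : ℕ => ∫ x, min (g x) M ∂μ) atTop atTop := by
  refine tendsto_atTop_atTop_of_monotone (fun M N hMN => integral_mono
    (integrable_min_natCast hg hg0 M) (integrable_min_natCast hg hg0 N)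
    fun x => min_le_min_left _ (Nat.cast_le.2 hMN)) fun b => ?_
  -- a uniform bound `b` would, by monotone convergence, make `∫⁻ ofReal g` finite
  by_contra! hb
  refine hint ⟨hg, (hasFiniteIntegral_iff_ofReal (ae_of_all _ hg0)).2 ?_⟩
  have hlim : Tendsto (fun M : ℕ => ∫⁻ x, ENNReal.ofReal (min (g x) M) ∂μ) atTop
      (𝓝 (∫⁻ x, ENNReal.ofReal (g x) ∂μ)) := by
    refine lintegral_tendsto_of_tendsto_of_monotone
      (fun M => (integrable_min_natCast hg hg0 M).aemeasurable.ennreal_ofReal)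
      (ae_of_all _ fun x M N hMN =>
        ENNReal.ofReal_le_ofReal (min_le_min_left _ (Nat.cast_le.2 hMN)))
      (ae_of_all _ fun x => tendsto_atTop_of_eventually_const (i₀ := ⌈g x⌉₊) fun M hM => ?_)
    rw [min_eq_left ((Nat.le_ceil _).trans (Nat.cast_le.2 hM))]
  refine (le_of_tendsto' hlim fun M => ?_).trans_lt (ENNReal.ofReal_lt_top (r := b))
  rw [← ofReal_integral_eq_lintegral_ofReal (integrable_min_natCast hg hg0 M)
    (ae_of_all _ fun x => le_min (hg0 x) M.cast_nonneg)]
  exact ENNReal.ofReal_le_ofReal (hb M).le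

lemma integrable_max_neg_natCast {f : α → ℝ} (hf : AEStronglyMeasurable f μ)
    (hpos : Integrable (fun x => max (f x) 0) μ) (M : ℕ) :
    Integrable (fun x => max (f x) (-M)) μ :=
  (hpos.add (integrable_const (M : ℝ))).mono' (hf.sup aestronglyMeasurable_const) <|
    ae_of_all _ fun x => by
      have hM : (0 : ℝ) ≤ M := M.cast_nonneg
      rw [Real.norm_eq_abs, Pi.add_apply, abs_le]
      exact ⟨by linarith [le_max_right (f x) (-M), le_max_right (f x) 0],
        max_le (by linarith [le_max_left (f x) 0]) (by linarith [le_max_right (f x) 0])⟩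

lemma tendsto_integral_max_neg_natCast_atBot {f : α → ℝ} (hf : AEStronglyMeasurable f μ)
    (hpos : Integrable (fun x => max (f x) 0) μ) (hint : ¬ Integrable f μ) :
    Tendsto (fun M : ℕ => ∫ x, max (f x) (-M) ∂μ) atTop atBot := by
  have hneg : ¬ Integrable (fun x => max (-f x) 0) μ := fun h =>
    hint ((hpos.sub h).congr (ae_of_all _ fun x => max_zero_sub_max_neg_zero_eq_self (f x)))
  have hneg_meas : AEStronglyMeasurable (fun x => max (-f x) 0) μ :=
    hf.neg.sup aestronglyMeasurable_const
  have hsplit (M : ℕ) : ∫ x, max (f x) (-M) ∂μ =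
      ∫ x, max (f x) 0 ∂μ - ∫ x, min (max (-f x) 0) M ∂μ := by
    rw [← integral_sub hpos (integrable_min_natCast hneg_meas
      (fun x => le_max_right _ _) M)]
    congr 1 with x
    have hM : (0 : ℝ) ≤ M := M.cast_nonneg
    simp only [max_def, min_def]
    split_ifs <;> linarith
  simp_rw [hsplit, sub_eq_add_neg]
  exact tendsto_atBot_add_const_left _ _ (tendsto_neg_atTop_atBot.comp
    (tendsto_integral_min_natCast_atTop hneg_meas
      (fun x => le_max_right _ _) hneg))

end Truncation

theorem strong_law_ae_real_tendsto_atBot {Ω : Type*} [MeasurableSpace Ω] {μ : Measure Ω}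
    [IsFiniteMeasure μ] (X : ℕ → Ω → ℝ) (hindep : Pairwise fun i j => X i ⟂ᵢ[μ] X j)
    (hident : ∀ i, IdentDistrib (X i) (X 0) μ μ)
    (hpos : Integrable (fun ω => max (X 0 ω) 0) μ) (hint : ¬ Integrable (X 0) μ) :
    ∀ᵐ ω ∂μ, Tendsto (fun n : ℕ => (∑ i ∈ range n, X i ω) / n) atTop atBot := by
  have htrunc_meas (M : ℕ) : Measurable fun x : ℝ => max x (-M) :=
    measurable_id.max measurable_const
  have hlaw : ∀ᵐ ω ∂μ, ∀ M : ℕ, Tendsto (fun n : ℕ => (∑ i ∈ range n, max (X i ω) (-M)) / n)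
      atTop (𝓝 (∫ ω, max (X 0 ω) (-M) ∂μ)) := ae_all_iff.2 fun M =>
    strong_law_ae_real (fun i ω => max (X i ω) (-M))
      (integrable_max_neg_natCast (hident 0).aestronglyMeasurable_fst hpos M)
      (fun i j hij => (hindep hij).comp (htrunc_meas M) (htrunc_meas M))
      (fun i => (hident i).comp (htrunc_meas M))
  filter_upwards [hlaw] with ω hω
  refine tendsto_atBot.2 fun a => ?_
  obtain ⟨M, hM⟩ := ((tendsto_integral_max_neg_natCast_atBot (hident 0).aestronglyMeasurable_fst
    hpos hint).eventually (eventually_lt_atBot a)).exists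
  filter_upwards [(hω M).eventually (ge_mem_nhds hM)] with n hn
  exact (div_le_div_of_nonneg_right (sum_le_sum fun i _ => le_max_left _ _) n.cast_nonneg).trans hn

noncomputable def logAddSumExp (c : ℝ) (φ : ℕ → ℝ) (n : ℕ) : ℝ :=
  Real.log (c + ∑ l ∈ Icc 1 n, Real.exp (l * φ l))

section LogAddSumExp

variable {c : ℝ} {φ : ℕ → ℝ}

lemma add_sum_exp_pos (hc : 0 < c) (n : ℕ) : 0 < c + ∑ l ∈ Icc 1 n, Real.exp (l * φ l) :=
  add_pos_of_pos_of_nonneg hc (sum_nonneg fun _ _ => (Real.exp_pos _).le)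

lemma log_le_logAddSumExp (hc : 0 < c) (n : ℕ) : Real.log c ≤ logAddSumExp c φ n :=
  Real.log_le_log hc (le_add_of_nonneg_right (sum_nonneg fun _ _ => (Real.exp_pos _).le))

lemma mul_le_logAddSumExp (hc : 0 < c) {n : ℕ} (hn : 1 ≤ n) : n * φ n ≤ logAddSumExp c φ n := by
  rw [logAddSumExp, Real.le_log_iff_exp_le (add_sum_exp_pos hc n)]
  have : Real.exp (n * φ n) ≤ ∑ l ∈ Icc 1 n, Real.exp (l * φ l) :=
    single_le_sum (f := fun l : ℕ => Real.exp (l * φ l)) (fun _ _ => (Real.exp_pos _).le)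
      (mem_Icc.2 ⟨hn, le_rfl⟩)
  linarith

lemma logAddSumExp_le (hc : 0 < c) {a : ℝ} (ha : 0 ≤ a) {N : ℕ} (hN : ∀ l ≥ N, φ l ≤ a)
    {n : ℕ} (hn : 1 ≤ n) :
    logAddSumExp c φ n ≤
      Real.log n + Real.log (c + ∑ l ∈ range N, Real.exp (l * φ l) + 1) + n * a := by
  set A := ∑ l ∈ range N, Real.exp (l * φ l)
  set E := Real.exp (n * a)
  have hA : 0 ≤ A := sum_nonneg fun _ _ => (Real.exp_pos _).le
  have hE : 1 ≤ E := Real.one_le_exp (by positivity)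
  have hn' : (1 : ℝ) ≤ n := Nat.one_le_cast.2 hn
  have hterm : ∀ l ∈ Icc 1 n, Real.exp (l * φ l) ≤ A + E := by
    intro l hl
    rcases lt_or_ge l N with hlN | hlN
    · have : Real.exp (l * φ l) ≤ A :=
        single_le_sum (f := fun l : ℕ => Real.exp (l * φ l)) (fun _ _ => (Real.exp_pos _).le)
          (mem_range.2 hlN)
      linarith
    · have hln : (l : ℝ) ≤ n := Nat.cast_le.2 (mem_Icc.1 hl).2
      have : l * φ l ≤ n * a :=
        (mul_le_mul_of_nonneg_left (hN l hlN) l.cast_nonneg).trans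
          (mul_le_mul_of_nonneg_right hln ha)
      linarith [Real.exp_le_exp.2 this]
  have hsum : ∑ l ∈ Icc 1 n, Real.exp (l * φ l) ≤ n * (A + E) := by
    simpa [mul_add] using sum_le_card_nsmul _ _ _ hterm
  have hbound : c + ∑ l ∈ Icc 1 n, Real.exp (l * φ l) ≤ n * (c + A + 1) * E := by
    nlinarith [mul_nonneg hc.le (sub_nonneg.2 (one_le_mul_of_one_le_of_one_le hn' hE)),
      mul_nonneg (mul_nonneg (zero_le_one.trans hn') hA) (sub_nonneg.2 hE)]
  calc logAddSumExp c φ n ≤ Real.log (n * (c + A + 1) * E) :=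
        Real.log_le_log (add_sum_exp_pos hc n) hbound
    _ = Real.log n + Real.log (c + A + 1) + n * a := by
        rw [Real.log_mul (by positivity) (Real.exp_pos _).ne', Real.log_mul (by positivity)
          (by positivity), Real.log_exp]

lemma tendsto_log_add_const_div_atTop (C : ℝ) :
    Tendsto (fun n : ℕ => (Real.log n + C) / n) atTop (𝓝 0) := by
  have hlog : Tendsto (fun n : ℕ => Real.log n / n) atTop (𝓝 0) :=
    Real.isLittleO_log_id_atTop.tendsto_div_nhds_zero.comp tendsto_natCast_atTop_atTop
  simpa only [add_div, add_zero] using hlog.add (tendsto_const_div_atTop_nhds_zero_nat C)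

lemma eventually_logAddSumExp_div_lt (hc : 0 < c) {a b : ℝ} (ha : 0 ≤ a) (hab : a < b)
    (hφ : ∀ᶠ l in atTop, φ l ≤ a) : ∀ᶠ n : ℕ in atTop, logAddSumExp c φ n / n < b := by
  obtain ⟨N, hN⟩ := eventually_atTop.1 hφ
  have hlim := (tendsto_log_add_const_div_atTop
    (Real.log (c + ∑ l ∈ range N, Real.exp (l * φ l) + 1))).add_const a
  rw [zero_add] at hlim
  filter_upwards [hlim.eventually (gt_mem_nhds hab), eventually_ge_atTop 1] with n hlt hn
  have hn' : (0 : ℝ) < n := Nat.cast_pos.2 hn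
  refine lt_of_le_of_lt ?_ hlt
  rw [div_add' _ _ _ hn'.ne', div_le_div_iff_of_pos_right hn']
  exact (logAddSumExp_le hc ha hN hn).trans_eq (by ring)

lemma eventually_lt_logAddSumExp_div_of_neg (hc : 0 < c) {a : ℝ} (ha : a < 0) :
    ∀ᶠ n : ℕ in atTop, a < logAddSumExp c φ n / n := by
  filter_upwards [(tendsto_const_div_atTop_nhds_zero_nat (Real.log c)).eventually (lt_mem_nhds ha),
    eventually_ge_atTop 1] with n hlt hn
  exact hlt.trans_le (div_le_div_of_nonneg_right (log_le_logAddSumExp hc n) n.cast_nonneg)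

lemma eventually_lt_logAddSumExp_div (hc : 0 < c) {a : ℝ} (hφ : ∀ᶠ l in atTop, a < φ l) :
    ∀ᶠ n : ℕ in atTop, a < logAddSumExp c φ n / n := by
  filter_upwards [hφ, eventually_ge_atTop 1] with n hlt hn
  have hn' : (0 : ℝ) < n := Nat.cast_pos.2 hn
  rw [lt_div_iff₀ hn', mul_comm]
  exact (mul_lt_mul_of_pos_left hlt hn').trans_le (mul_le_logAddSumExp hc hn)

theorem tendsto_logAddSumExp_div (hc : 0 < c) {L : ℝ} (hφ : Tendsto φ atTop (𝓝 L)) :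
    Tendsto (fun n : ℕ => logAddSumExp c φ n / n) atTop (𝓝 (max L 0)) := by
  refine tendsto_order.2 ⟨fun a ha => ?_, fun b hb => ?_⟩
  · rcases lt_max_iff.1 ha with ha | ha
    · exact eventually_lt_logAddSumExp_div hc (hφ.eventually (lt_mem_nhds ha))
    · exact eventually_lt_logAddSumExp_div_of_neg hc ha
  · obtain ⟨a, hLa, hab⟩ := exists_between hb
    exact eventually_logAddSumExp_div_lt hc ((le_max_right _ _).trans hLa.le) hab
      (hφ.eventually (ge_mem_nhds ((le_max_left _ _).trans_lt hLa)))

theorem tendsto_logAddSumExp_div_of_tendsto_atBot (hc : 0 < c) (hφ : Tendsto φ atTop atBot) :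
    Tendsto (fun n : ℕ => logAddSumExp c φ n / n) atTop (𝓝 0) := by
  refine tendsto_order.2 ⟨fun a ha => eventually_lt_logAddSumExp_div_of_neg hc ha, fun b hb => ?_⟩
  obtain ⟨a, ha, hab⟩ := exists_between hb
  exact eventually_logAddSumExp_div_lt hc ha.le hab (hφ.eventually (eventually_le_atBot a))

end LogAddSumExp

theorem stmt8_general
    {Ω : Type*} [MeasurableSpace Ω] (P : Measure Ω) [IsProbabilityMeasure P]
    (ξ : ℕ → Ω → ℝ)
    (hindep : iIndepFun ξ P)
    (hident : ∀ n, IdentDistrib (ξ n) (ξ 0) P P)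
    (hpospart : Integrable (fun ω => max (Real.log (ξ 0 ω)) 0) P)
    (lam : EReal)
    (hlam : (Integrable (fun ω => Real.log (ξ 0 ω)) P →
        lam = ((∫ ω, Real.log (ξ 0 ω) ∂P : ℝ) : EReal)) ∧
      (¬ Integrable (fun ω => Real.log (ξ 0 ω)) P → lam = ⊥))
    (c : ℝ) (hc : 0 < c) (δ : ℕ → ℝ) (hδ : Tendsto δ atTop (nhds 0)) :
    ∀ᵐ ω ∂P, Tendsto
      (fun n : ℕ =>
        Real.log (c + ∑ l ∈ Finset.Icc 1 n,
          Real.exp ((l : ℝ) *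
            ((∑ k ∈ Finset.Icc 1 l, Real.log (ξ k ω)) / (l : ℝ) + δ l))) / (n : ℝ))
      atTop (nhds (max lam.toReal 0)) := by
  set X : ℕ → Ω → ℝ := fun i ω => Real.log (ξ (i + 1) ω)
  have hX0 : IdentDistrib (X 0) (fun ω => Real.log (ξ 0 ω)) P P :=
    (hident 1).comp Real.measurable_log
  have hident' (i : ℕ) : IdentDistrib (X i) (X 0) P P :=
    ((hident (i + 1)).comp Real.measurable_log).trans hX0.symm
  have hindep' : Pairwise fun i j => X i ⟂ᵢ[P] X j := fun i j hij =>
    (hindep.indepFun (by omega : i + 1 ≠ j + 1)).comp Real.measurable_log Real.measurable_log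
  have hsum (ω : Ω) (n : ℕ) : ∑ k ∈ Icc 1 n, Real.log (ξ k ω) = ∑ i ∈ range n, X i ω := by
    rw [range_eq_Ico, sum_Ico_add' (fun k => Real.log (ξ k ω)) 0 n 1]
    rfl
  simp_rw [hsum]
  by_cases hint : Integrable (fun ω => Real.log (ξ 0 ω)) P
  · rw [hlam.1 hint, EReal.toReal_coe, ← hX0.integral_eq]
    filter_upwards [strong_law_ae_real X (hX0.integrable_iff.2 hint) hindep' hident'] with ω hω
    exact tendsto_logAddSumExp_div hc (by simpa only [add_zero] using hω.add hδ)
  · rw [hlam.2 hint, EReal.toReal_bot, max_self]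
    have hpos : Integrable (fun ω => max (X 0 ω) 0) P :=
      ((hident 1).comp (Real.measurable_log.max measurable_const)).integrable_iff.2 hpospart
    filter_upwards [strong_law_ae_real_tendsto_atBot X hindep' hident' hpos
      (mt hX0.integrable_iff.1 hint)] with ω hω
    exact tendsto_logAddSumExp_div_of_tendsto_atBot hc (hω.atBot_add hδ)

theorem stmt8
    {Ω : Type*} [MeasurableSpace Ω] (P : Measure Ω) [IsProbabilityMeasure P]
    (ξ : ℕ → Ω → ℝ) (hmeas : ∀ n, Measurable (ξ n))
    (hpos : ∀ n, ∀ᵐ ω ∂P, 0 < ξ n ω)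
    (hindep : iIndepFun ξ P)
    (hident : ∀ n, IdentDistrib (ξ n) (ξ 0) P P)
    (hpospart : Integrable (fun ω => max (Real.log (ξ 0 ω)) 0) P)
    (lam : EReal)
    (hlam : (Integrable (fun ω => Real.log (ξ 0 ω)) P →
        lam = ((∫ ω, Real.log (ξ 0 ω) ∂P : ℝ) : EReal)) ∧
      (¬ Integrable (fun ω => Real.log (ξ 0 ω)) P → lam = ⊥))
    (hlt : lam < ⊤)
    (c : ℝ) (hc : 0 < c) (δ : ℕ → ℝ) (hδ : Tendsto δ atTop (nhds 0)) :
    ∀ᵐ ω ∂P, Tendsto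
      (fun n : ℕ =>
        Real.log (c + ∑ l ∈ Finset.Icc 1 n,
          Real.exp ((l : ℝ) *
            ((∑ k ∈ Finset.Icc 1 l, Real.log (ξ k ω)) / (l : ℝ) + δ l))) / (n : ℝ))
      atTop (nhds (max lam.toReal 0)) :=
  stmt8_general P ξ hindep hident hpospart lam hlam c hc δ hδ
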